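/- Let G be a MAGIIAN and G^K its MKBSC expansion. Every full play π = l_0 σ_0 l_1 σ_1 … in G gives rise to exactly one full play s_0 σ_0 s_1 σ_1 … in G^K that is consistent with the actions and the observations of the agents, i.e., such that s_k(i) ⊆ obs_i(l_k) for all agents i ∈ Agt and all k ≥ 0. -/
import Mathlib


open Set

/-- A multi-agent game with imperfect information against Nature (MAGIIAN).
`obs i l` is the observation block of agent `i` containing location `l`;
the axioms make the blocks of each agent a partition of the locations. -/
structure MAGIIAN (Agt Loc : Type) (Act : Agt → Type) where
  init : Loc
  trans : Loc → (∀ i, Act i) → Loc → Prop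
  obs : Agt → Loc → Set Loc
  obs_mem : ∀ i l, l ∈ obs i l
  obs_eq : ∀ i l l', l' ∈ obs i l → obs i l' = obs i l

namespace MAGIIAN

variable {Agt Loc : Type} {Act : Agt → Type}

/-- `o` is an observation (block) of agent `i` in `G`. -/
def IsObs (G : MAGIIAN Agt Loc Act) (i : Agt) (o : Set Loc) : Prop :=
  ∃ l, o = G.obs i l

/-- Transition relation `Δ_i` of the projection `G|_i`. -/
def projTrans (G : MAGIIAN Agt Loc Act) (i : Agt) (l : Loc) (a : Act i) (l' : Loc) : Prop :=
  ∃ σ : ∀ j, Act j, σ i = a ∧ G.trans l σ l'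

/-- Transition relation `Δ^K_i` of the individual KBSC expansion `(G|_i)^K`. -/
def kTrans (G : MAGIIAN Agt Loc Act) (i : Agt) (s : Set Loc) (a : Act i) (s' : Set Loc) : Prop :=
  ∃ o : Set Loc, G.IsObs i o ∧ s' = {l' ∈ o | ∃ l ∈ s, G.projTrans i l a l'} ∧ s'.Nonempty

/-- Pruned joint transition relation `Δ^K` of the MKBSC expansion `G^K`
(unrealisable transitions are removed). -/
def kTransJ (G : MAGIIAN Agt Loc Act) (s : Agt → Set Loc) (σ : ∀ i, Act i)
    (s' : Agt → Set Loc) : Prop :=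
  (∀ i, G.kTrans i (s i) (σ i) (s' i)) ∧
    ∃ l ∈ (⋂ i, s i), ∃ l' ∈ (⋂ i, s' i), G.trans l σ l'

/-- The MKBSC expansion `G^K`, as a MAGIIAN over joint knowledge states;
agent `i`'s observation of a joint knowledge state is determined by its `i`-th component. -/
def expand (G : MAGIIAN Agt Loc Act) : MAGIIAN Agt (Agt → Set Loc) Act where
  init := fun _ => {G.init}
  trans := G.kTransJ
  obs := fun i s => {s' | s' i = s i}
  obs_mem := fun _ _ => rfl
  obs_eq := by
    intro i s s' h
    simp only [Set.mem_setOf_eq] at h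
    ext t
    simp [Set.mem_setOf_eq, h]

/-- Reachability from the initial location. -/
def Reachable (G : MAGIIAN Agt Loc Act) (l : Loc) : Prop :=
  Relation.ReflTransGen (fun x y => ∃ σ, G.trans x σ y) G.init l

/-- The MKBSC expansion `G^K` fulfills the perfect-distributed-knowledge (PDK) condition:
every reachable joint knowledge state has singleton component intersection. -/
def PDK (G : MAGIIAN Agt Loc Act) : Prop :=
  ∀ s : Agt → Set Loc, G.expand.Reachable s → ∃ l : Loc, (⋂ i, s i) = {l}

/-- A full play, given as its sequences of locations and of joint actions. -/
def IsPlay (G : MAGIIAN Agt Loc Act) (l : ℕ → Loc) (σ : ℕ → ∀ i, Act i) : Prop :=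
  l 0 = G.init ∧ ∀ k, G.trans (l k) (σ k) (l (k + 1))

/-- Observation history of agent `i` (list of observation blocks) up to time `k`. -/
def obsHist (G : MAGIIAN Agt Loc Act) (i : Agt) (l : ℕ → Loc) (k : ℕ) : List (Set Loc) :=
  (List.range (k + 1)).map fun j => G.obs i (l j)

/-- Outcomes (location sequences) of a profile of observation-based
perfect-recall strategies. -/
def PROutcome (G : MAGIIAN Agt Loc Act) (α : ∀ i, List (Set Loc) → Act i)
    (l : ℕ → Loc) : Prop :=
  ∃ σ : ℕ → ∀ i, Act i, G.IsPlay l σ ∧ ∀ k i, σ k i = α i (G.obsHist i l k)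

/-- Outcomes of a profile of observation-based memoryless strategies. -/
def MLOutcome (G : MAGIIAN Agt Loc Act) (α : ∀ i, Set Loc → Act i) (l : ℕ → Loc) : Prop :=
  ∃ σ : ℕ → ∀ i, Act i, G.IsPlay l σ ∧ ∀ k i, σ k i = α i (G.obs i (l k))

/-- A play is winning for an observable reachability objective `R` iff some
agent at some point observes an observation in `R`. -/
def WinsReach (G : MAGIIAN Agt Loc Act) (R : Set (Set Loc)) (l : ℕ → Loc) : Prop :=
  ∃ i k, G.obs i (l k) ∈ R

/-- A play is winning for an observable safety objective `F` iff at every point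
some agent observes an observation in `F`. -/
def WinsSafe (G : MAGIIAN Agt Loc Act) (F : Set (Set Loc)) (l : ℕ → Loc) : Prop :=
  ∀ k, ∃ i, G.obs i (l k) ∈ F

/-- `ob_i`: maps an observation block of `G^K` for agent `i` (all of whose members have the
same `i`-th component `A`) to the unique observation of `i` in `G` that includes `A`. -/
def obMap (G : MAGIIAN Agt Loc Act) (i : Agt) (O : Set (Agt → Set Loc)) : Set Loc :=
  ⋃ s ∈ O, ⋃ l ∈ s i, G.obs i l

/-- The translated objective `R^K = {s ∈ S : ∃ i, ∃ o ∈ R ∩ Obs_i, s i ⊆ o}`,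
as a set of joint knowledge states. -/
def transObj (G : MAGIIAN Agt Loc Act) (R : Set (Set Loc)) : Set (Agt → Set Loc) :=
  {s | ∃ i, ∃ o ∈ R, G.IsObs i o ∧ s i ⊆ o}

end MAGIIAN


namespace MAGIIAN

variable {Agt Loc : Type} {Act : Agt → Type}

/-- The canonical lifted knowledge-state sequence. -/
def liftSeq (G : MAGIIAN Agt Loc Act) (l : ℕ → Loc) (σ : ℕ → ∀ i, Act i) :
    ℕ → Agt → Set Loc
  | 0 => fun _ => {G.init}
  | k + 1 => fun i =>
      {l' ∈ G.obs i (l (k + 1)) | ∃ l0 ∈ G.liftSeq l σ k i, G.projTrans i l0 (σ k i) l'}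

lemma liftSeq_mem (G : MAGIIAN Agt Loc Act) (l : ℕ → Loc) (σ : ℕ → ∀ i, Act i)
    (h : G.IsPlay l σ) : ∀ k i, l k ∈ G.liftSeq l σ k i := by
  intro k
  induction k with
  | zero => intro i; simp [liftSeq, h.1]
  | succ k ih =>
    intro i
    refine ⟨G.obs_mem i _, l k, ih i, σ k, rfl, h.2 k⟩

lemma liftSeq_subset (G : MAGIIAN Agt Loc Act) (l : ℕ → Loc) (σ : ℕ → ∀ i, Act i)
    (h : G.IsPlay l σ) : ∀ k i, G.liftSeq l σ k i ⊆ G.obs i (l k) := by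
  intro k i x hx
  cases k with
  | zero =>
    simp only [liftSeq, Set.mem_singleton_iff] at hx
    subst hx; rw [h.1]; exact G.obs_mem i _
  | succ k => exact hx.1

/-- Every full play `l_0 σ_0 l_1 σ_1 …` in `G` gives rise to exactly one full play
`s_0 σ_0 s_1 σ_1 …` in `G^K` that is consistent with the actions and the observations
of the agents, i.e. such that `s_k(i) ⊆ obs_i(l_k)` for all agents `i` and all `k`. -/
theorem unique_lifted_play (G : MAGIIAN Agt Loc Act)
    (l : ℕ → Loc) (σ : ℕ → ∀ i, Act i) (h : G.IsPlay l σ) :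
    ∃! s : ℕ → Agt → Set Loc,
      s 0 = (fun _ => {G.init}) ∧
      (∀ k, G.kTransJ (s k) (σ k) (s (k + 1))) ∧
      (∀ k i, s k i ⊆ G.obs i (l k)) := by
  refine ⟨G.liftSeq l σ, ⟨rfl, ?_, G.liftSeq_subset l σ h⟩, ?_⟩
  · intro k
    constructor
    · intro i
      refine ⟨G.obs i (l (k + 1)), ⟨l (k + 1), rfl⟩, rfl, l (k + 1), ?_⟩
      exact G.liftSeq_mem l σ h (k + 1) i
    · exact ⟨l k, Set.mem_iInter.2 (G.liftSeq_mem l σ h k),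
        l (k + 1), Set.mem_iInter.2 (G.liftSeq_mem l σ h (k + 1)), h.2 k⟩
  · intro t ⟨ht0, htT, htO⟩
    funext k
    induction k with
    | zero => exact ht0
    | succ k ih =>
      funext i
      obtain ⟨o, ⟨l0, ho⟩, hteq, htne⟩ := (htT k).1 i
      obtain ⟨x, hx⟩ := htne
      have hxo : x ∈ o := by rw [hteq] at hx; exact hx.1
      have hxobs : x ∈ G.obs i (l (k + 1)) := htO (k + 1) i hx
      have : o = G.obs i (l (k + 1)) := by
        rw [ho] at hxo ⊢
        rw [← G.obs_eq i l0 x hxo, G.obs_eq i (l (k + 1)) x hxobs]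
      rw [hteq, this, ih]
      rfl

end MAGIIAN
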